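/- arXiv:2411.07460 — 3 statements merged into one kernel-verified Lean document; each statement's English description precedes it below -/
import Mathlib

section
/- (Jacobi–Anger expansion.) For all real numbers x and θ, the family (i^ν J_ν(x) e^{iνθ})_{ν∈ℤ} (where i^ν denotes the ν-th integer power of the imaginary unit) is summable in ℂ with sum equal to exp(i x cos θ); that is, exp(i x cos θ) = J₀(x) + Σ_{ν∈ℤ, ν≠0} i^ν J_ν(x) e^{iνθ}. -/
/-! The function `f t = exp (i x cos t)` is smooth and `2π`-periodic. Integrating by parts twice
shows that its Fourier coefficients are `O(1/n²)`, so they are summable and the Fourier series of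
`f` converges to `f` everywhere. The substitution `t = -π/2 - τ` turns the `n`-th coefficient into
`iⁿ / 2π · ∫_{-π}^{π} exp (i (n τ - x sin τ)) dτ`; the real part of this integrand is even and its
imaginary part odd, so the integral is `2 ∫₀^π cos (n τ - x sin τ) dτ = 2π J_n(x)`. -/

open Real Complex Function intervalIntegral

/-- The Bessel function of the first kind of integer order `ν`:
`J_ν(x) = (1/π) ∫₀^π cos (ν τ − x sin τ) dτ`. -/
noncomputable def besselJ (ν : ℤ) (x : ℝ) : ℝ :=
  (1 / Real.pi) * ∫ τ in (0:ℝ)..Real.pi, Real.cos (ν * τ - x * Real.sin τ)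

section PeriodicFourier

variable {T : ℝ} {f : ℝ → ℂ}

lemma periodic_deriv (hf : Periodic f T) : Periodic (deriv f) T := fun x => by
  rw [← deriv_comp_add_const, hf.funext]

lemma norm_fourierCoeffOn_le {a b C : ℝ} (hab : a < b) (n : ℤ)
    (hC : ∀ t ∈ Set.Icc a b, ‖f t‖ ≤ C) : ‖fourierCoeffOn hab f n‖ ≤ C := by
  have hbound : ∀ t ∈ Set.uIoc a b, ‖fourier (-n) (t : AddCircle (b - a)) • f t‖ ≤ C :=
    fun t ht => by
      rw [norm_smul, show ‖fourier (-n) (t : AddCircle (b - a))‖ = 1 from Circle.norm_coe _,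
        one_mul]
      exact hC t (Set.Ioc_subset_Icc_self (Set.uIoc_of_le hab.le ▸ ht))
  have hba : 0 < b - a := sub_pos.mpr hab
  rw [fourierCoeffOn_eq_integral, norm_smul, Real.norm_of_nonneg (by positivity)]
  calc 1 / (b - a) * ‖∫ t in a..b, fourier (-n) (t : AddCircle (b - a)) • f t‖
      ≤ 1 / (b - a) * (C * |b - a|) := by gcongr; exact norm_integral_le_of_norm_le_const hbound
    _ = C := by rw [abs_of_pos hba]; field_simp

lemma Function.Periodic.fourierCoeffOn_eq_mul_fourierCoeffOn_deriv (hT : 0 < T)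
    (hper : Periodic f T) (hf : Differentiable ℝ f) (hf' : Continuous (deriv f)) {n : ℤ}
    (hn : n ≠ 0) :
    fourierCoeffOn hT f n = T / (2 * π * I * n) * fourierCoeffOn hT (deriv f) n := by
  rw [fourierCoeffOn_of_hasDerivAt hT hn (fun t _ => (hf t).hasDerivAt)
    (hf'.intervalIntegrable _ _), show f T = f 0 by simpa using hper 0, sub_self, mul_zero,
    zero_sub, ofReal_zero, sub_zero]
  have : (n : ℂ) ≠ 0 := Int.cast_ne_zero.mpr hn
  field_simp

lemma Function.Periodic.summable_fourierCoeffOn (hT : 0 < T) (hper : Periodic f T)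
    (hf : ContDiff ℝ 2 f) : Summable (fourierCoeffOn hT f) := by
  have hf1 : ContDiff ℝ 1 (deriv f) := (contDiff_succ_iff_deriv.mp hf).2.2
  obtain ⟨C, hC⟩ := isCompact_Icc.exists_bound_of_continuousOn
    (hf1.continuous_deriv le_rfl).continuousOn (s := Set.Icc 0 T)
  have hcoeff (n : ℤ) (hn : n ≠ 0) :
      ‖fourierCoeffOn hT f n‖ ≤ (T / (2 * π)) ^ 2 * C * (1 / n ^ 2) := by
    rw [hper.fourierCoeffOn_eq_mul_fourierCoeffOn_deriv hT (hf.differentiable two_ne_zero)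
        (hf.continuous_deriv one_le_two) hn,
      (periodic_deriv hper).fourierCoeffOn_eq_mul_fourierCoeffOn_deriv hT
        (hf1.differentiable one_ne_zero) (hf1.continuous_deriv le_rfl) hn]
    have hf'' := norm_fourierCoeffOn_le hT n hC
    generalize fourierCoeffOn hT (deriv (deriv f)) n = c at hf'' ⊢
    have hn' : (0 : ℝ) < |(n : ℝ)| := abs_pos.mpr (Int.cast_ne_zero.mpr hn)
    simp only [norm_mul, norm_div, Complex.norm_I, Complex.norm_real, Complex.norm_intCast,
      Complex.norm_ofNat, Real.norm_eq_abs, abs_of_pos hT, abs_of_pos pi_pos, mul_one]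
    calc T / (2 * π * |(n : ℝ)|) * (T / (2 * π * |(n : ℝ)|) * ‖c‖)
        = (T / (2 * π)) ^ 2 * ‖c‖ * (1 / |(n : ℝ)| ^ 2) := by
          field_simp
      _ ≤ (T / (2 * π)) ^ 2 * C * (1 / n ^ 2) := by rw [sq_abs]; gcongr
  refine Summable.of_norm_bounded_eventually
    ((summable_one_div_int_pow.mpr one_lt_two).mul_left ((T / (2 * π)) ^ 2 * C)) ?_
  filter_upwards [(Set.finite_singleton (0 : ℤ)).compl_mem_cofinite] with n hn
  exact hcoeff n hn

theorem Function.Periodic.hasSum_fourier_series_of_contDiff (hT : 0 < T) (hper : Periodic f T)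
    (hf : ContDiff ℝ 2 f) (x : ℝ) :
    HasSum (fun n : ℤ => fourierCoeffOn hT f n * fourier n (x : AddCircle T)) (f x) := by
  have := Fact.mk hT
  let F : C(AddCircle T, ℂ) := ⟨hper.lift, continuous_coinduced_dom.mpr hf.continuous⟩
  have hF : fourierCoeff F = fourierCoeffOn hT f := funext fun n => by
    rw [fourierCoeff_eq_intervalIntegral _ n 0, fourierCoeffOn_eq_integral, zero_add]
    simp only [fourier_coe_apply, F, ContinuousMap.coe_mk, hper.lift_coe, sub_zero]
  have hsum : Summable (fourierCoeff F) := hF ▸ hper.summable_fourierCoeffOn hT hf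
  exact hF ▸ has_pointwise_sum_fourier_series_of_summable hsum x

end PeriodicFourier

lemma intervalIntegral.integral_neg_self_eq_integral_add_comp_neg {E : Type*}
    [NormedAddCommGroup E] [NormedSpace ℝ E] {g : ℝ → E} (hg : Continuous g) (a : ℝ) :
    ∫ τ in -a..a, g τ = ∫ τ in 0..a, (g τ + g (-τ)) := by
  rw [integral_add (hg.intervalIntegrable _ _) (Continuous.intervalIntegrable (by fun_prop) _ _),
    integral_comp_neg, neg_zero, add_comm,
    integral_add_adjacent_intervals (hg.intervalIntegrable _ _) (hg.intervalIntegrable _ _)]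

noncomputable def besselIntegrand (n : ℤ) (x τ : ℝ) : ℂ := cexp (I * (n * τ - x * Real.sin τ))

lemma besselJ_eq_integral_besselIntegrand (n : ℤ) (x : ℝ) :
    (besselJ n x : ℂ) = 1 / (2 * π) * ∫ τ in -π..π, besselIntegrand n x τ := by
  rw [integral_neg_self_eq_integral_add_comp_neg (by unfold besselIntegrand; fun_prop),
    integral_congr (g := fun τ => 2 * (Real.cos (n * τ - x * Real.sin τ) : ℂ)) fun τ _ => by
      simp only [besselIntegrand, Real.sin_neg, ofReal_neg, ofReal_cos, two_cos]
      push_cast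
      ring_nf,
    integral_const_mul, intervalIntegral.integral_ofReal, besselJ]
  have : (π : ℂ) ≠ 0 := ofReal_ne_zero.mpr pi_ne_zero
  push_cast
  field_simp

lemma periodic_besselIntegrand (n : ℤ) (x : ℝ) : Periodic (besselIntegrand n x) (2 * π) := by
  intro τ
  simp only [besselIntegrand, ofReal_add, Real.sin_add_two_pi]
  rw [show I * (n * (τ + (2 * π : ℝ)) - x * Real.sin τ) =
      I * (n * τ - x * Real.sin τ) + n * (2 * π * I) by push_cast; ring,
    Complex.exp_add, exp_int_mul_two_pi_mul_I, mul_one]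

lemma fourierCoeffOn_exp_I_mul_cos (x : ℝ) (n : ℤ) :
    fourierCoeffOn two_pi_pos (fun t => cexp (I * x * Real.cos t)) n = I ^ n * besselJ n x := by
  set E : ℝ → ℂ :=
    fun t => fourier (-n) (t : AddCircle (2 * π - 0)) • cexp (I * x * Real.cos t)
  have hE (τ : ℝ) : E (-(π / 2) - τ) = I ^ n * besselIntegrand n x τ := by
    have hcos : Real.cos (-(π / 2) - τ) = -Real.sin τ := by
      rw [show -(π / 2) - τ = -(τ + π / 2) by ring, Real.cos_neg, Real.cos_add_pi_div_two]
    have hpi : (π : ℂ) ≠ 0 := ofReal_ne_zero.mpr pi_ne_zero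
    rw [show I ^ n = cexp (n * (π / 2 * I)) by rw [exp_int_mul, exp_pi_div_two_mul_I]]
    simp only [E, besselIntegrand, fourier_coe_apply, smul_eq_mul, hcos, ← Complex.exp_add]
    congr 1
    push_cast
    field_simp
    ring
  have hshift : ∫ t in 0..2 * π, E t = ∫ τ in -(π / 2) - 2 * π..-(π / 2), E (-(π / 2) - τ) := by
    rw [integral_comp_sub_left]
    congr 1 <;> ring
  have hperiod : ∫ τ in -(π / 2) - 2 * π..-(π / 2), besselIntegrand n x τ =
      ∫ τ in -π..π, besselIntegrand n x τ := by
    have := (periodic_besselIntegrand n x).intervalIntegral_add_eq (-(π / 2) - 2 * π) (-π)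
    rwa [show -(π / 2) - 2 * π + 2 * π = -(π / 2) by ring, show -π + 2 * π = π by ring] at this
  rw [fourierCoeffOn_eq_integral, besselJ_eq_integral_besselIntegrand, hshift,
    integral_congr fun τ _ => hE τ, integral_const_mul, hperiod, sub_zero, real_smul]
  push_cast
  ring

/-- Jacobi–Anger expansion: the family `(i^ν J_ν(x) e^{iνθ})_{ν ∈ ℤ}` is summable
with sum `exp (i x cos θ)`. -/
theorem stmt_5 (x θ : ℝ) :
    HasSum
      (fun ν : ℤ =>
        Complex.I ^ ν * (besselJ ν x : ℂ) * Complex.exp (Complex.I * ν * θ))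
      (Complex.exp (Complex.I * x * Real.cos θ)) := by
  have hper : Periodic (fun t : ℝ => cexp (I * x * Real.cos t)) (2 * π) := fun t => by
    simp only [Real.cos_add_two_pi]
  have hsmooth : ContDiff ℝ 2 fun t : ℝ => cexp (I * x * Real.cos t) :=
    contDiff_exp.comp (contDiff_const.mul (ofRealCLM.contDiff.comp contDiff_cos))
  have hfourier := hper.hasSum_fourier_series_of_contDiff two_pi_pos hsmooth θ
  simp only [fourierCoeffOn_exp_I_mul_cos, fourier_coe_apply] at hfourier
  convert hfourier using 4
  have : (π : ℂ) ≠ 0 := ofReal_ne_zero.mpr pi_ne_zero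
  push_cast
  field_simp
end

section
/- The squared Euclidean norm of (I − M)·w(r) equals N·(N² − |S(r)|²)/(N−1)²; equivalently, Σ_{p=1}^N |(w(r) − M·w(r))_p|² = (N/(N−1))² · (N − |S(r)|²/N). -/
open scoped RealInnerProductSpace
open Finset Matrix

/-!
With `φ_p = k⟪θ_p, r⋆⟫`, `x_p = e^{-iφ_p}`, `y_p = e^{iφ_p}` and `u_p = exp(i k⟪θ_p, r⋆ - r⟫)` one has
`M = (x yᵀ - I) / (N - 1)`, `w_p = x_p u_p` and `yᵀ w = ∑ u_p = S`, so
`((I - M) w)_p = x_p (N u_p - S) / (N - 1)`. The `x_p` are phases and the `u_p` unit vectors summing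
to `S`, whence `∑_p |N u_p - S|² = N³ - 2N|S|² + N|S|² = N (N² - |S|²)`.
-/

theorem sum_norm_smul_sub_sum_sq {ι E : Type*} [Fintype ι] [NormedAddCommGroup E]
    [InnerProductSpace ℝ E] (a : ℝ) (x : ι → E) :
    ∑ p, ‖a • x p - ∑ q, x q‖ ^ 2 =
      a ^ 2 * ∑ p, ‖x p‖ ^ 2 - (2 * a - Fintype.card ι) * ‖∑ q, x q‖ ^ 2 := by
  simp only [norm_sub_sq_real, norm_smul, inner_smul_left, sum_add_distrib, sum_sub_distrib,
    ← sum_inner, real_inner_self_eq_norm_sq, sum_const, card_univ, nsmul_eq_mul, mul_pow,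
    Real.norm_eq_abs, sq_abs, ← mul_sum, conj_trivial]
  ring

theorem sum_norm_card_smul_sub_sum_sq_of_norm_eq_one {ι E : Type*} [Fintype ι]
    [NormedAddCommGroup E] [InnerProductSpace ℝ E] (u : ι → E) (hu : ∀ p, ‖u p‖ = 1) :
    ∑ p, ‖(Fintype.card ι : ℝ) • u p - ∑ q, u q‖ ^ 2 =
      Fintype.card ι * ((Fintype.card ι : ℝ) ^ 2 - ‖∑ q, u q‖ ^ 2) := by
  rw [sum_norm_smul_sub_sum_sq]
  simp only [hu, one_pow, sum_const, card_univ, nsmul_eq_mul, mul_one]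
  ring

theorem one_sub_smul_vecMulVec_sub_one_mulVec {ι K : Type*} [Fintype ι] [DecidableEq ι]
    [Field K] (x y v : ι → K) {d : K} (hd : d ≠ 0) :
    (1 - d⁻¹ • (vecMulVec x y - 1)) *ᵥ v = d⁻¹ • ((d + 1) • v - (y ⬝ᵥ v) • x) := by
  ext i
  simp only [sub_mulVec, one_mulVec, smul_mulVec, vecMulVec_mulVec, op_smul_eq_smul,
    Pi.sub_apply, Pi.smul_apply, smul_eq_mul]
  field_simp
  ring

theorem sum_norm_one_sub_smul_vecMulVec_sub_one_mulVec_sq {ι : Type*} [Fintype ι] [DecidableEq ι]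
    (x y u : ι → ℂ) (hyx : ∀ p, y p * x p = 1) (hx : ∀ p, ‖x p‖ = 1) (hu : ∀ p, ‖u p‖ = 1)
    (hcard : 1 < Fintype.card ι) :
    ∑ p, ‖((1 - ((Fintype.card ι : ℂ) - 1)⁻¹ • (vecMulVec x y - 1)) *ᵥ (x * u)) p‖ ^ 2 =
      Fintype.card ι * ((Fintype.card ι : ℝ) ^ 2 - ‖∑ q, u q‖ ^ 2) /
        ((Fintype.card ι : ℝ) - 1) ^ 2 := by
  have hn : (0 : ℝ) < Fintype.card ι - 1 := sub_pos.2 (by exact_mod_cast hcard)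
  have hdot : y ⬝ᵥ (x * u) = ∑ q, u q := by
    simp only [dotProduct, Pi.mul_apply, ← mul_assoc, hyx, one_mul]
  have hentry : ∀ p, ((1 - ((Fintype.card ι : ℂ) - 1)⁻¹ • (vecMulVec x y - 1)) *ᵥ (x * u)) p =
      x p * (((Fintype.card ι : ℝ) - 1)⁻¹ • ((Fintype.card ι : ℝ) • u p - ∑ q, u q)) := by
    intro p
    have hd : (Fintype.card ι : ℂ) - 1 ≠ 0 := by exact_mod_cast hn.ne'
    rw [one_sub_smul_vecMulVec_sub_one_mulVec _ _ _ hd, hdot]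
    simp only [Pi.smul_apply, Pi.sub_apply, Pi.mul_apply, smul_eq_mul, Complex.real_smul]
    push_cast
    ring
  simp only [hentry, norm_mul, norm_smul, hx, one_mul, norm_inv, Real.norm_of_nonneg hn.le,
    mul_pow, ← mul_sum, sum_norm_card_smul_sub_sum_sq_of_norm_eq_one u hu]
  field_simp

theorem stmt_7_general (N : ℕ) (hN : 2 ≤ N) (k : ℝ)
    (θ : Fin N → EuclideanSpace ℝ (Fin 2))
    (r rstar : EuclideanSpace ℝ (Fin 2))
    (w : Fin N → ℂ)
    (hw : ∀ p, w p = Complex.exp (-Complex.I * k * (⟪θ p, r⟫ : ℝ)))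
    (M : Matrix (Fin N) (Fin N) ℂ)
    (hM : ∀ m n, M m n = if m = n then 0
        else Complex.exp (-Complex.I * k * (⟪θ m - θ n, rstar⟫ : ℝ)) / ((N : ℂ) - 1))
    (S : ℂ)
    (hS : S = ∑ n, Complex.exp (Complex.I * k * (⟪θ n, rstar - r⟫ : ℝ))) :
    ∑ p, ‖((1 - M).mulVec w) p‖ ^ 2 =
      ((N : ℝ) / ((N : ℝ) - 1)) ^ 2 * ((N : ℝ) - ‖S‖ ^ 2 / (N : ℝ)) := by
  set e : ℝ → ℂ := fun t => Complex.exp (Complex.I * t) with he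
  set x : Fin N → ℂ := fun p => e (-(k * ⟪θ p, rstar⟫))
  set y : Fin N → ℂ := fun p => e (k * ⟪θ p, rstar⟫)
  set u : Fin N → ℂ := fun p => e (k * ⟪θ p, rstar - r⟫)
  have hyx : ∀ n, y n * x n = 1 := fun n => by
    simp only [x, y, he, ← Complex.exp_add, Complex.ofReal_neg, mul_neg, add_neg_cancel,
      Complex.exp_zero]
  have hM' : M = ((N : ℂ) - 1)⁻¹ • (vecMulVec x y - 1) := by
    ext m n
    rw [hM, Matrix.smul_apply, Matrix.sub_apply, vecMulVec_apply, one_apply, smul_eq_mul]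
    split_ifs with h
    · rw [h, mul_comm (x n), hyx, sub_self, mul_zero]
    · simp only [x, y, he, sub_zero, div_eq_inv_mul, ← Complex.exp_add, inner_sub_left]
      push_cast
      ring_nf
  have hw' : w = x * u := by
    ext p
    simp only [hw, Pi.mul_apply, x, u, he, ← Complex.exp_add, inner_sub_right]
    push_cast
    ring_nf
  have hS' : S = ∑ n, u n := by
    simp only [hS, u, he]
    push_cast
    ring_nf
  have hsum := sum_norm_one_sub_smul_vecMulVec_sub_one_mulVec_sq x y u hyx
    (fun _ => Complex.norm_exp_I_mul_ofReal _) (fun _ => Complex.norm_exp_I_mul_ofReal _)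
    (by rwa [Fintype.card_fin])
  rw [Fintype.card_fin] at hsum
  rw [hM', hw', hsum, hS']
  field_simp

/-- MUSIC model: `‖(I − M)·w(r)‖² = N·(N² − |S(r)|²)/(N−1)²`, i.e.
`Σ_p |((I − M)·w(r))_p|² = (N/(N−1))² · (N − |S(r)|²/N)`. -/
theorem stmt_7 (N : ℕ) (hN : 2 ≤ N) (k : ℝ) (hk : 0 < k)
    (θ : Fin N → EuclideanSpace ℝ (Fin 2)) (hθ : ∀ n, ‖θ n‖ = 1)
    (r rstar : EuclideanSpace ℝ (Fin 2))
    (w : Fin N → ℂ)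
    (hw : ∀ p, w p = Complex.exp (-Complex.I * k * (⟪θ p, r⟫ : ℝ)))
    (M : Matrix (Fin N) (Fin N) ℂ)
    (hM : ∀ m n, M m n = if m = n then 0
        else Complex.exp (-Complex.I * k * (⟪θ m - θ n, rstar⟫ : ℝ)) / ((N : ℂ) - 1))
    (S : ℂ)
    (hS : S = ∑ n, Complex.exp (Complex.I * k * (⟪θ n, rstar - r⟫ : ℝ))) :
    ∑ p, ‖((1 - M).mulVec w) p‖ ^ 2 =
      ((N : ℝ) / ((N : ℝ) - 1)) ^ 2 * ((N : ℝ) - ‖S‖ ^ 2 / (N : ℝ)) :=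
  stmt_7_general N hN k θ r rstar w hw M hM S hS
end

section
/- (Unique determination of the anomaly, Corollary 3.2.) Suppose there exist indices a, b, c, d ∈ {1,…,N} such that the vectors θ_a − θ_b and θ_c − θ_d are linearly independent in ℝ², and suppose k·|r − r⋆| < π. Then (I − M)·w(r) = 0 if and only if r = r⋆; equivalently, |S(r)| = N if and only if r = r⋆. -/
open scoped RealInnerProductSpace

/-!
Write `z n = exp (i k θ_n · (r⋆ - r))`, so that `w = u * z` with `u n = exp (-i k θ_n · r⋆)` and
`M` is the matrix `u m / u n / (N - 1)` off the diagonal. Then `((I - M) w)_m` is a nonzero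
multiple of `N z_m - S`, so both conditions say that all the unit numbers `z_n` coincide (for
`|S| = N` this is the equality case of the triangle inequality). Now `z_p = z_q` forces
`k (θ_p - θ_q) · (r⋆ - r) ∈ 2πℤ`, and this phase has modulus `≤ 2 k |r - r⋆| < 2π`, so it vanishes.
A vector of the plane orthogonal to the two independent differences `θ_a - θ_b`, `θ_c - θ_d`
is zero.
-/

open Complex Finset
open scoped Matrix

section UnitVectors

variable {E : Type*} [NormedAddCommGroup E] [InnerProductSpace ℝ E] {ι : Type*} [Fintype ι]

theorem eq_inv_card_smul_sum_of_norm_sum_eq_card {z : ι → E} (hz : ∀ i, ‖z i‖ = 1)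
    (h : ‖∑ j, z j‖ = Fintype.card ι) (i : ι) :
    z i = (Fintype.card ι : ℝ)⁻¹ • ∑ j, z j := by
  set u := (Fintype.card ι : ℝ)⁻¹ • ∑ j, z j
  have hcard : (0 : ℝ) < Fintype.card ι := by exact_mod_cast Fintype.card_pos_iff.mpr ⟨i⟩
  have hu : ‖u‖ = 1 := by simp [u, norm_smul, h, hcard.ne']
  have hle : ∀ j ∈ univ, ⟪u, z j⟫ ≤ 1 := fun j _ =>
    (real_inner_le_norm _ _).trans (by rw [hu, hz, one_mul])
  have hsum : ∑ j, ⟪u, z j⟫ = ∑ _j : ι, (1 : ℝ) := by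
    rw [← inner_sum, sum_const, card_univ, nsmul_one, real_inner_smul_left,
      real_inner_self_eq_norm_sq, h]
    field_simp
  have hi := (sum_eq_sum_iff_of_le hle).mp hsum i (mem_univ i)
  exact ((inner_eq_one_iff_of_norm_eq_one hu (hz i)).mp hi).symm

theorem norm_sum_eq_card_iff {z : ι → E} (hz : ∀ i, ‖z i‖ = 1) :
    ‖∑ i, z i‖ = Fintype.card ι ↔ ∀ i j, z i = z j := by
  refine ⟨fun h i j => ?_, fun h => ?_⟩
  · rw [eq_inv_card_smul_sum_of_norm_sum_eq_card hz h i,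
      eq_inv_card_smul_sum_of_norm_sum_eq_card hz h j]
  · rcases isEmpty_or_nonempty ι with _ | ⟨⟨i⟩⟩
    · simp
    · rw [sum_congr rfl fun j _ => h j i, sum_const, card_univ, RCLike.norm_nsmul ℝ, hz, nsmul_one]

end UnitVectors

theorem card_mul_eq_sum_iff {ι K : Type*} [Fintype ι] [Field K] [CharZero K] {z : ι → K} :
    (∀ i, (Fintype.card ι : K) * z i = ∑ j, z j) ↔ ∀ i j, z i = z j := by
  refine ⟨fun h i j => ?_, fun h i => ?_⟩
  · have : Nonempty ι := ⟨i⟩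
    exact mul_left_cancel₀ (Nat.cast_ne_zero.mpr Fintype.card_ne_zero) ((h i).trans (h j).symm)
  · rw [sum_congr rfl fun j _ => h j i, sum_const, card_univ, nsmul_eq_mul]

section OffDiagonal

variable {K ι : Type*} [Field K] [Fintype ι] [DecidableEq ι]

theorem one_sub_of_ite_div_mulVec_mul_apply (u z : ι → K) (hu : ∀ i, u i ≠ 0) (c : K) (m : ι) :
    ((1 - Matrix.of fun i j => if i = j then 0 else u i / u j / c) *ᵥ (u * z)) m
      = u m * (z m - (∑ j, z j - z m) / c) := by
  have hterm : ∀ j, (if m = j then 0 else u m / u j / c) * (u * z) j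
      = u m / c * z j - if m = j then u m / c * z j else 0 := by
    intro j
    split_ifs with hmj
    · simp
    · rw [Pi.mul_apply, sub_zero]
      field_simp [hu j]
  rw [Matrix.sub_mulVec, Matrix.one_mulVec, Pi.sub_apply, Matrix.mulVec, dotProduct]
  simp only [Matrix.of_apply]
  rw [sum_congr rfl fun j _ => hterm j]
  simp only [sum_sub_distrib, ← mul_sum, sum_ite_eq, mem_univ, if_true, Pi.mul_apply]
  field_simp

theorem one_sub_of_ite_div_mulVec_mul_eq_zero_iff [CharZero K] (hι : Fintype.card ι ≠ 1)
    (u z : ι → K) (hu : ∀ i, u i ≠ 0) :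
    (1 - Matrix.of fun i j => if i = j then 0 else u i / u j / ((Fintype.card ι : K) - 1)) *ᵥ
        (u * z) = 0 ↔ ∀ i, (Fintype.card ι : K) * z i = ∑ j, z j := by
  have hc : (Fintype.card ι : K) - 1 ≠ 0 := sub_ne_zero.mpr (by exact_mod_cast hι)
  simp only [funext_iff, Pi.zero_apply, one_sub_of_ite_div_mulVec_mul_apply u z hu,
    mul_eq_zero, hu, false_or, sub_eq_zero, eq_div_iff hc]
  refine forall_congr' fun i => ⟨fun h => ?_, fun h => ?_⟩ <;> linear_combination h

end OffDiagonal

theorem Complex.exp_ofReal_mul_I_eq_one_iff_of_abs_lt {x : ℝ} (hx : |x| < 2 * Real.pi) :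
    exp (x * I) = 1 ↔ x = 0 := by
  refine ⟨fun h => ?_, fun h => by simp [h]⟩
  obtain ⟨n, hn⟩ := exp_eq_one_iff.mp h
  have hxn : x = n * (2 * Real.pi) := by
    apply_fun im at hn
    simpa using hn
  rcases eq_or_ne n 0 with rfl | hn0
  · simpa using hxn
  · have : (1 : ℝ) ≤ |(n : ℝ)| := by exact_mod_cast Int.one_le_abs hn0
    rw [hxn, abs_mul, abs_of_pos Real.two_pi_pos] at hx
    nlinarith [Real.two_pi_pos]

theorem inner_sub_eq_zero_of_cexp_eq {E : Type*} [NormedAddCommGroup E] [InnerProductSpace ℝ E]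
    {k : ℝ} (hk : 0 < k) {u v x : E} (hu : ‖u‖ ≤ 1) (hv : ‖v‖ ≤ 1) (hx : k * ‖x‖ < Real.pi)
    (h : exp (I * k * (⟪u, x⟫ : ℝ)) = exp (I * k * (⟪v, x⟫ : ℝ))) : ⟪u - v, x⟫ = 0 := by
  have hphase : exp ((k * ⟪u - v, x⟫ : ℝ) * I) = 1 := by
    rw [exp_eq_exp_iff_exp_sub_eq_one] at h
    rw [← h, inner_sub_left]
    push_cast
    ring_nf
  have hbound : |k * ⟪u - v, x⟫| < 2 * Real.pi := by
    calc |k * ⟪u - v, x⟫| ≤ k * (‖u - v‖ * ‖x‖) := by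
          rw [abs_mul, abs_of_pos hk]
          exact mul_le_mul_of_nonneg_left (abs_real_inner_le_norm _ _) hk.le
      _ ≤ k * (2 * ‖x‖) := by
          gcongr
          linarith [norm_sub_le u v]
      _ < 2 * Real.pi := by linarith
  have := (exp_ofReal_mul_I_eq_one_iff_of_abs_lt hbound).mp hphase
  exact (mul_eq_zero.mp this).resolve_left hk.ne'

theorem eq_zero_of_forall_inner_eq_zero_of_linearIndependent
    {E : Type*} [NormedAddCommGroup E] [InnerProductSpace ℝ E]
    {ι : Type*} [Fintype ι] [Nonempty ι] {b : ι → E} (hb : LinearIndependent ℝ b)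
    (hcard : Fintype.card ι = Module.finrank ℝ E) {x : E} (h : ∀ i, ⟪b i, x⟫ = 0) : x = 0 :=
  InnerProductSpace.ext_inner_left_basis (basisOfLinearIndependentOfCardEqFinrank hb hcard)
    fun i => by simpa using h i

/-- Unique determination of the anomaly (Corollary 3.2): if some two antenna-direction
differences `θ_a − θ_b` and `θ_c − θ_d` are linearly independent and `k·|r − r⋆| < π`,
then `(I − M)·w(r) = 0 ↔ r = r⋆`, equivalently `|S(r)| = N ↔ r = r⋆`. -/
theorem stmt_11 (N : ℕ) (hN : 2 ≤ N) (k : ℝ) (hk : 0 < k)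
    (θ : Fin N → EuclideanSpace ℝ (Fin 2)) (hθ : ∀ n, ‖θ n‖ = 1)
    (r rstar : EuclideanSpace ℝ (Fin 2))
    (w : Fin N → ℂ)
    (hw : ∀ p, w p = Complex.exp (-Complex.I * k * (⟪θ p, r⟫ : ℝ)))
    (M : Matrix (Fin N) (Fin N) ℂ)
    (hM : ∀ m n, M m n = if m = n then 0
        else Complex.exp (-Complex.I * k * (⟪θ m - θ n, rstar⟫ : ℝ)) / ((N : ℂ) - 1))
    (S : ℂ)
    (hS : S = ∑ n, Complex.exp (Complex.I * k * (⟪θ n, rstar - r⟫ : ℝ)))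
    (a b c d : Fin N)
    (hli : LinearIndependent ℝ ![θ a - θ b, θ c - θ d])
    (hdist : k * ‖r - rstar‖ < Real.pi) :
    ((1 - M).mulVec w = 0 ↔ r = rstar) ∧ (‖S‖ = N ↔ r = rstar) := by
  set z : Fin N → ℂ := fun n => exp (I * k * (⟪θ n, rstar - r⟫ : ℝ))
  set u : Fin N → ℂ := fun n => exp (-I * k * (⟪θ n, rstar⟫ : ℝ))
  have hwz : w = u * z := funext fun p => by
    rw [hw, Pi.mul_apply, ← exp_add, inner_sub_right]
    push_cast
    ring_nf
  have hMu : M = Matrix.of fun m n =>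
      if m = n then 0 else u m / u n / ((Fintype.card (Fin N) : ℂ) - 1) := by
    ext m n
    rw [hM, Matrix.of_apply, Fintype.card_fin, ← exp_sub, inner_sub_left]
    push_cast
    ring_nf
  have hconst : (∀ p q, z p = z q) ↔ r = rstar := by
    refine ⟨fun h => ?_, fun h p q => by simp [z, h]⟩
    have horth : ∀ p q, ⟪θ p - θ q, rstar - r⟫ = 0 := fun p q =>
      inner_sub_eq_zero_of_cexp_eq hk (hθ p).le (hθ q).le (by rwa [norm_sub_rev]) (h p q)
    exact (sub_eq_zero.mp (eq_zero_of_forall_inner_eq_zero_of_linearIndependent hli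
      (by simp) (Fin.forall_fin_two.mpr ⟨horth a b, horth c d⟩))).symm
  have hcard : Fintype.card (Fin N) ≠ 1 := by rw [Fintype.card_fin]; omega
  have hz : ∀ n, ‖z n‖ = 1 := fun n => by simp [z, norm_exp]
  rw [hS, hMu, hwz, one_sub_of_ite_div_mulVec_mul_eq_zero_iff hcard u z (fun n => exp_ne_zero _),
    card_mul_eq_sum_iff]
  refine ⟨hconst, ?_⟩
  simpa only [Fintype.card_fin] using (norm_sum_eq_card_iff hz).trans hconst
end
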